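/- Let T(x) be the formal power series satisfying T(x) = x + x·T(x) + T(x)² with T(0) = 0. Then the number of equivalence classes of rooted-signed-binary trees with n nodes equals the coefficient of xⁿ in T(x), i.e., equals the n-th large Schröder number. Equivalently, the numbers t_n of rooted binary trees with n nodes in which the root is unsigned, every other node carries a sign in {+,−}, the root has no right child, and no node's right child shares its parent's sign (the 'left-normalized' representatives) have generating function T(x) = x + x·T(x) + T(x)². -/

import Mathlib

/-- Binary trees in which each (non-root) node carries a sign.  A tree is a node together with
optional signed left and right subtrees; the root itself is unsigned. -/
inductive SBT : Type
  | node : Option (Bool × SBT) → Option (Bool × SBT) → SBT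

mutual
  /-- Number of nodes of the tree. -/
  def SBT.size : SBT → ℕ
    | .node l r => 1 + SBT.osize l + SBT.osize r
  def SBT.osize : Option (Bool × SBT) → ℕ
    | none => 0
    | some (_, t) => SBT.size t
end

mutual
  /-- A signed subtree is well-signed if no node's right child shares its parent's sign. -/
  def SBT.sOk : Bool → SBT → Bool
    | b, .node l r =>
      SBT.oOk l && SBT.oOk r &&
        (match r with
          | none => true
          | some (b', _) => b' != b)
  def SBT.oOk : Option (Bool × SBT) → Bool
    | none => true
    | some (b, t) => SBT.sOk b t
end

/-- Left-normalized rooted-signed-binary tree: the root has no right child, and no node's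
right child shares its parent's sign. -/
def SBT.leftNormalized : SBT → Prop
  | .node l r => r = none ∧ SBT.oOk l = true

/-- The number of left-normalized rooted-signed-binary trees with `n` nodes. -/
noncomputable def sbtCount (n : ℕ) : ℕ :=
  Nat.card {t : SBT // t.size = n ∧ t.leftNormalized}

namespace SBTAux

open SBT

instance optFinite (α : Type) [Finite α] : Finite (Option α) :=
  Finite.of_equiv _ (Equiv.optionEquivSumPUnit.{0,0} α).symm

lemma size_node (l r) : (SBT.node l r).size = 1 + SBT.osize l + SBT.osize r := rfl

lemma size_pos : ∀ t : SBT, 0 < t.size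
  | .node l r => by rw [size_node]; omega

/-- flip signs along right spine -/
def flipR : SBT → SBT
  | .node l none => .node l none
  | .node l (some (b, t)) => .node l (some (!b, flipR t))

lemma flipR_flipR : ∀ t, flipR (flipR t) = t
  | .node l none => rfl
  | .node l (some (b, t)) => by simp [flipR, flipR_flipR t]

lemma size_flipR : ∀ t, (flipR t).size = t.size
  | .node l none => rfl
  | .node l (some (b, t)) => by
      simp only [flipR]
      show 1 + SBT.osize l + (flipR t).size = 1 + SBT.osize l + t.size
      rw [size_flipR t]

lemma sOk_flipR : ∀ (b : Bool) (t : SBT), SBT.sOk (!b) (flipR t) = SBT.sOk b t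
  | b, .node l none => rfl
  | b, .node l (some (b', t)) => by
      simp only [flipR, SBT.sOk, SBT.oOk]
      rw [sOk_flipR b' t]
      cases b <;> cases b' <;> simp

/-- restrict an optional subtree of bounded size -/
def restrictO (n : ℕ) : (o : Option (Bool × SBT)) → SBT.osize o ≤ n → Option (Bool × {t : SBT // t.size ≤ n})
  | none, _ => none
  | some (b, t), h => some (b, ⟨t, h⟩)

lemma restrictO_inj {n : ℕ} {o₁ o₂ h₁ h₂} (h : restrictO n o₁ h₁ = restrictO n o₂ h₂) : o₁ = o₂ := by
  cases o₁ with
  | none => cases o₂ with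
    | none => rfl
    | some p => obtain ⟨b, t⟩ := p; simp [restrictO] at h
  | some p => obtain ⟨b, t⟩ := p; cases o₂ with
    | none => simp [restrictO] at h
    | some q => obtain ⟨c, u⟩ := q; simp [restrictO] at h; simp [h.1]; exact congrArg Subtype.val h.2

lemma finite_le : ∀ n : ℕ, Finite {t : SBT // t.size ≤ n} := by
  intro n
  induction n with
  | zero =>
    have : IsEmpty {t : SBT // t.size ≤ 0} :=
      ⟨fun x => by have := size_pos x.1; have := x.2; omega⟩
    infer_instance
  | succ n ih =>
    have key : ∀ (x : {t : SBT // t.size ≤ n + 1}), ∃ l r, ∃ (_ : SBT.osize l ≤ n) (_ : SBT.osize r ≤ n),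
        x.1 = SBT.node l r := by
      rintro ⟨⟨l, r⟩, hx⟩
      rw [size_node] at hx
      exact ⟨l, r, by omega, by omega, rfl⟩
    choose L R hL hR hnode using key
    refine Finite.of_injective (fun x => (restrictO n (L x) (hL x), restrictO n (R x) (hR x))) ?_
    intro x y hxy
    have h1 := congrArg Prod.fst hxy
    have h2 := congrArg Prod.snd hxy
    have e1 := restrictO_inj h1
    have e2 := restrictO_inj h2
    exact Subtype.ext (by rw [hnode x, hnode y, e1, e2])

lemma finite_sub (n : ℕ) (P : SBT → Prop) : Finite {t : SBT // t.size = n ∧ P t} := by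
  have := finite_le n
  refine Finite.of_injective
    (fun x : {t : SBT // t.size = n ∧ P t} =>
      show {t : SBT // t.size ≤ n} from ⟨x.1, le_of_eq x.2.1⟩) ?_
  intro x y h
  exact Subtype.ext (by simpa [Subtype.ext_iff] using h)

lemma finite_osub (n : ℕ) (P : Option (Bool × SBT) → Prop) :
    Finite {o : Option (Bool × SBT) // SBT.osize o = n ∧ P o} := by
  have := finite_le n
  have hle : ∀ (x : {o : Option (Bool × SBT) // SBT.osize o = n ∧ P o}), SBT.osize x.1 ≤ n :=
    fun x => le_of_eq x.2.1
  refine Finite.of_injective (fun x => restrictO n x.1 (hle x)) ?_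
  intro x y h
  exact Subtype.ext (restrictO_inj h)

end SBTAux

namespace SBTAux2
open SBT SBTAux Finset

/-- sign constraint for a right child relative to parent sign `b` -/
def rOk (b : Bool) : Option (Bool × SBT) → Prop
  | none => True
  | some (b', _) => b' = !b

noncomputable def hcnt (b : Bool) (n : ℕ) : ℕ :=
  Nat.card {t : SBT // t.size = n ∧ SBT.sOk b t = true}

noncomputable def lcnt (n : ℕ) : ℕ :=
  Nat.card {o : Option (Bool × SBT) // SBT.osize o = n ∧ SBT.oOk o = true}

noncomputable def rcnt (b : Bool) (n : ℕ) : ℕ :=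
  Nat.card {o : Option (Bool × SBT) // SBT.osize o = n ∧ (SBT.oOk o = true ∧ rOk b o)}

lemma nat_card_sigma {ι : Type} [Fintype ι] (f : ι → Type) [∀ i, Finite (f i)] :
    Nat.card (Σ i, f i) = ∑ i, Nat.card (f i) := by
  letI := fun i => Fintype.ofFinite (f i)
  simp [Nat.card_eq_fintype_card, Fintype.card_sigma]

lemma hcnt_zero (b : Bool) : hcnt b 0 = 0 := by
  have : IsEmpty {t : SBT // t.size = 0 ∧ SBT.sOk b t = true} :=
    ⟨fun x => by have := size_pos x.1; have := x.2.1; omega⟩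
  exact Nat.card_of_isEmpty

lemma hcnt_flip (b : Bool) (n : ℕ) : hcnt b n = hcnt (!b) n := by
  refine Nat.card_congr ⟨fun x => ⟨flipR x.1, ?_, ?_⟩, fun x => ⟨flipR x.1, ?_, ?_⟩, ?_, ?_⟩
  · rw [size_flipR]; exact x.2.1
  · rw [sOk_flipR]; exact x.2.2
  · rw [size_flipR]; exact x.2.1
  · have h := x.2.2
    have e := sOk_flipR (!b) x.1
    simp only [Bool.not_not] at e
    rw [e]; exact h
  · intro x; exact Subtype.ext (flipR_flipR x.1)
  · intro x; exact Subtype.ext (flipR_flipR x.1)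

lemma hcnt_eq (b : Bool) (n : ℕ) : hcnt b n = hcnt true n := by
  cases b
  · simpa using hcnt_flip false n
  · rfl

lemma lcnt_zero : lcnt 0 = 1 := by
  haveI : Unique {o : Option (Bool × SBT) // SBT.osize o = 0 ∧ SBT.oOk o = true} := by
    refine ⟨⟨⟨none, rfl, rfl⟩⟩, ?_⟩
    rintro ⟨o, h1, h2⟩
    cases o with
    | none => rfl
    | some p =>
      obtain ⟨c, u⟩ := p
      exact absurd h1 (by have := size_pos u; simp only [SBT.osize]; omega)
  exact Nat.card_unique

lemma rcnt_zero (b : Bool) : rcnt b 0 = 1 := by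
  haveI : Unique {o : Option (Bool × SBT) // SBT.osize o = 0 ∧ (SBT.oOk o = true ∧ rOk b o)} := by
    refine ⟨⟨⟨none, rfl, rfl, trivial⟩⟩, ?_⟩
    rintro ⟨o, h1, h2⟩
    cases o with
    | none => rfl
    | some p =>
      obtain ⟨c, u⟩ := p
      exact absurd h1 (by have := size_pos u; simp only [SBT.osize]; omega)
  exact Nat.card_unique

def sumMap (n : ℕ) :
    ({t : SBT // t.size = n ∧ SBT.sOk true t = true} ⊕
      {t : SBT // t.size = n ∧ SBT.sOk false t = true}) →
    {o : Option (Bool × SBT) // SBT.osize o = n ∧ SBT.oOk o = true}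
  | .inl ⟨t, h⟩ => ⟨some (true, t), h.1, h.2⟩
  | .inr ⟨t, h⟩ => ⟨some (false, t), h.1, h.2⟩

lemma lcnt_succ (n : ℕ) : lcnt (n + 1) = hcnt true (n + 1) + hcnt false (n + 1) := by
  haveI := finite_sub (n+1) (fun t => SBT.sOk true t = true)
  haveI := finite_sub (n+1) (fun t => SBT.sOk false t = true)
  have hG : Function.Bijective (sumMap (n+1)) := by
    constructor
    · rintro (⟨t, h⟩ | ⟨t, h⟩) (⟨u, h'⟩ | ⟨u, h'⟩) hxy <;>
        simp only [sumMap, Subtype.mk.injEq, Option.some.injEq, Prod.mk.injEq] at hxy <;>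
        first
          | (cases hxy.2; rfl)
          | (exact (Bool.noConfusion hxy.1))
    · rintro ⟨o, h1, h2⟩
      cases o with
      | none => exact absurd h1 (by simp [SBT.osize])
      | some p =>
        obtain ⟨c, u⟩ := p
        cases c
        · exact ⟨.inr ⟨u, h1, h2⟩, rfl⟩
        · exact ⟨.inl ⟨u, h1, h2⟩, rfl⟩
  rw [lcnt, ← Nat.card_congr (Equiv.ofBijective _ hG), Nat.card_sum]
  rfl

def rMap (b : Bool) (n : ℕ) :
    {t : SBT // t.size = n ∧ SBT.sOk (!b) t = true} →
    {o : Option (Bool × SBT) // SBT.osize o = n ∧ (SBT.oOk o = true ∧ rOk b o)} :=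
  fun x => ⟨some (!b, x.1), x.2.1, x.2.2, rfl⟩

lemma rcnt_succ (b : Bool) (n : ℕ) : rcnt b (n + 1) = hcnt true (n + 1) := by
  rw [← hcnt_eq (!b)]
  have hG : Function.Bijective (rMap b (n+1)) := by
    constructor
    · rintro ⟨t, h⟩ ⟨u, h'⟩ hxy
      simp only [rMap, Subtype.mk.injEq, Option.some.injEq, Prod.mk.injEq] at hxy
      exact Subtype.ext hxy.2
    · rintro ⟨o, h1, h2, h3⟩
      cases o with
      | none => exact absurd h1 (by simp [SBT.osize])
      | some p =>
        obtain ⟨c, u⟩ := p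
        have hc : c = !b := h3
        subst hc
        exact ⟨⟨u, h1, h2⟩, rfl⟩
  rw [rcnt, ← Nat.card_congr (Equiv.ofBijective _ hG)]
  rfl

end SBTAux2

namespace SBTAux3
open SBT SBTAux SBTAux2 Finset

lemma sOk_node_none (b : Bool) (l) : SBT.sOk b (SBT.node l none) = SBT.oOk l := by
  simp [SBT.sOk, SBT.oOk]

lemma sOk_node_some (b : Bool) (l b' r) :
    SBT.sOk b (SBT.node l (some (b', r))) = (SBT.oOk l && SBT.sOk b' r && (b' != b)) := by
  simp [SBT.sOk, SBT.oOk]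

lemma sOk_build (b : Bool) (l r) (h1 : SBT.oOk l = true) (h2 : SBT.oOk r = true)
    (h3 : rOk b r) : SBT.sOk b (SBT.node l r) = true := by
  cases r with
  | none => simp [sOk_node_none, h1]
  | some p =>
    obtain ⟨b', t⟩ := p
    have : b' = !b := h3
    subst this
    simp only [sOk_node_some]
    simp only [SBT.oOk] at h2
    simp [h1, h2]

lemma sOk_destruct (b : Bool) (l r) (h : SBT.sOk b (SBT.node l r) = true) :
    SBT.oOk l = true ∧ SBT.oOk r = true ∧ rOk b r := by
  cases r with
  | none => simp only [sOk_node_none] at h; exact ⟨h, rfl, trivial⟩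
  | some p =>
    obtain ⟨b', t⟩ := p
    simp only [sOk_node_some, Bool.and_eq_true, bne_iff_ne] at h
    refine ⟨h.1.1, ?_, ?_⟩
    · simp only [SBT.oOk]; exact h.1.2
    · show b' = !b
      cases b <;> cases b' <;> simp_all

def fibL (i : ℕ) := {o : Option (Bool × SBT) // SBT.osize o = i ∧ SBT.oOk o = true}
def fibR (b : Bool) (j : ℕ) :=
  {o : Option (Bool × SBT) // SBT.osize o = j ∧ (SBT.oOk o = true ∧ rOk b o)}

instance fibL_finite (i : ℕ) : Finite (fibL i) := finite_osub i _
instance fibR_finite (b : Bool) (j : ℕ) : Finite (fibR b j) := finite_osub j _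

def sigMap (b : Bool) (n : ℕ) :
    (Σ i : Fin (n+1), fibL i × fibR b (n - i)) →
    {t : SBT // t.size = n + 1 ∧ SBT.sOk b t = true} :=
  fun x =>
    ⟨SBT.node x.2.1.1 x.2.2.1,
      by
        rw [size_node, x.2.1.2.1, x.2.2.2.1]
        have := x.1.isLt
        omega,
      sOk_build b _ _ x.2.1.2.2 x.2.2.2.2.1 x.2.2.2.2.2⟩

lemma sigMap_bijective (b : Bool) (n : ℕ) : Function.Bijective (sigMap b n) := by
  constructor
  · rintro ⟨i, ⟨l, hl1, hl2⟩, ⟨r, hr1, hr2⟩⟩ ⟨i', ⟨l', hl1', hl2'⟩, ⟨r', hr1', hr2'⟩⟩ hxy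
    simp only [sigMap, Subtype.mk.injEq, SBT.node.injEq] at hxy
    obtain ⟨el, er⟩ := hxy
    subst el; subst er
    have hi : i = i' := Fin.ext (by rw [← hl1, ← hl1'])
    subst hi
    rfl
  · rintro ⟨t, h1, h2⟩
    obtain ⟨l, r⟩ := t
    rw [size_node] at h1
    obtain ⟨hol, hor, hrs⟩ := sOk_destruct b l r h2
    refine ⟨⟨⟨SBT.osize l, by omega⟩, ⟨l, rfl, hol⟩, ⟨r, by simp; omega, hor, hrs⟩⟩, rfl⟩

lemma hcnt_succ (b : Bool) (n : ℕ) :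
    hcnt b (n + 1) = ∑ i ∈ range (n + 1), lcnt i * rcnt b (n - i) := by
  rw [hcnt, ← Nat.card_congr (Equiv.ofBijective _ (sigMap_bijective b n))]
  rw [nat_card_sigma]
  rw [← Fin.sum_univ_eq_sum_range (fun i => lcnt i * rcnt b (n - i)) (n+1)]
  refine Finset.sum_congr rfl fun i _ => ?_
  rw [Nat.card_prod]
  rfl

lemma sbt_zero : sbtCount 0 = 0 := by
  have : IsEmpty {t : SBT // t.size = 0 ∧ t.leftNormalized} :=
    ⟨fun x => by have := size_pos x.1; have := x.2.1; omega⟩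
  exact Nat.card_of_isEmpty

def lnMap (n : ℕ) : fibL n → {t : SBT // t.size = n + 1 ∧ t.leftNormalized} :=
  fun x =>
    ⟨SBT.node x.1 none,
      by rw [size_node, x.2.1]; show 1 + n + 0 = n + 1; omega,
      ⟨rfl, x.2.2⟩⟩

lemma lnMap_bijective (n : ℕ) : Function.Bijective (lnMap n) := by
  constructor
  · rintro ⟨l, hl⟩ ⟨l', hl'⟩ hxy
    simp only [lnMap, Subtype.mk.injEq, SBT.node.injEq] at hxy
    exact Subtype.ext hxy.1
  · rintro ⟨t, h1, h2⟩
    obtain ⟨l, r⟩ := t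
    obtain ⟨hr, hl⟩ := h2
    subst hr
    rw [size_node] at h1
    refine ⟨⟨l, by simp only [SBT.osize] at h1; omega, hl⟩, rfl⟩

lemma sbt_succ (n : ℕ) : sbtCount (n + 1) = lcnt n := by
  rw [sbtCount, ← Nat.card_congr (Equiv.ofBijective _ (lnMap_bijective n))]
  rfl

end SBTAux3

namespace SBTAux4
open SBT SBTAux SBTAux2 SBTAux3 Finset

noncomputable def H (n : ℕ) : ℕ := hcnt true n

noncomputable def A (n : ℕ) : ℕ := (if n = 0 then 1 else 0) + 2 * H n

lemma H_zero : H 0 = 0 := hcnt_zero true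

lemma lcnt_eq (n : ℕ) : lcnt n = A n := by
  cases n with
  | zero => simp [lcnt_zero, A, H_zero]
  | succ m =>
    rw [lcnt_succ, hcnt_eq false, A]
    simp [H]
    omega

lemma rcnt_eq (b : Bool) (n : ℕ) : rcnt b n = (if n = 0 then 1 else 0) + H n := by
  cases n with
  | zero => simp [rcnt_zero, H_zero]
  | succ m => rw [rcnt_succ]; simp [H]

lemma H_succ (n : ℕ) :
    H (n + 1) = ∑ i ∈ range (n + 1), A i * ((if n - i = 0 then 1 else 0) + H (n - i)) := by
  rw [H, hcnt_succ]
  exact Finset.sum_congr rfl fun i _ => by rw [lcnt_eq, rcnt_eq]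

lemma sbt_succ' (n : ℕ) : sbtCount (n + 1) = A n := by rw [sbt_succ, lcnt_eq]

lemma key (m : ℕ) :
    sbtCount (m + 1) = (if m = 0 then 1 else 0) + sbtCount m
      + ∑ i ∈ range (m + 2), sbtCount i * sbtCount (m + 1 - i) := by
  cases m with
  | zero =>
    simp [Finset.sum_range_succ, sbt_zero, sbt_succ', A, H_zero]
  | succ k =>
    have hs0 : sbtCount 0 = 0 := sbt_zero
    have hsum : ∑ i ∈ range (k + 3), sbtCount i * sbtCount (k + 2 - i)
        = ∑ i ∈ range (k + 1), A i * A (k - i) := by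
      rw [Finset.sum_range_succ' _ (k + 2)]
      rw [hs0, Nat.zero_mul, add_zero]
      rw [Finset.sum_range_succ]
      have h1 : k + 2 - (k + 1 + 1) = 0 := by omega
      rw [h1, hs0, Nat.mul_zero, add_zero]
      refine Finset.sum_congr rfl fun i hi => ?_
      have hik : i ≤ k := by simp at hi; omega
      rw [sbt_succ', show k + 2 - (i + 1) = (k - i) + 1 by omega, sbt_succ']
    rw [hsum, sbt_succ' (k + 1), sbt_succ' k]
    simp only [Nat.succ_ne_zero, if_false]
    have e1 : ∑ i ∈ range (k + 1), A i * ((if k - i = 0 then 1 else 0) + H (k - i))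
        = (∑ i ∈ range (k + 1), A i * (if k - i = 0 then 1 else 0))
          + ∑ i ∈ range (k + 1), A i * H (k - i) := by
      rw [← Finset.sum_add_distrib]
      exact Finset.sum_congr rfl fun i _ => by ring
    have e2 : ∑ i ∈ range (k + 1), A i * A (k - i)
        = (∑ i ∈ range (k + 1), A i * (if k - i = 0 then 1 else 0))
          + 2 * ∑ i ∈ range (k + 1), A i * H (k - i) := by
      rw [Finset.mul_sum, ← Finset.sum_add_distrib]
      refine Finset.sum_congr rfl fun i _ => ?_
      simp only [A]
      ring
    have e3 : ∑ i ∈ range (k + 1), A i * (if k - i = 0 then 1 else 0) = A k := by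
      rw [Finset.sum_eq_single_of_mem k (Finset.self_mem_range_succ k)]
      · simp
      · intro i hi hne
        have hik : k - i ≠ 0 := by simp at hi; omega
        simp [hik]
    show A (k + 1) = 0 + A k + _
    rw [A, H_succ, e1, e2, e3]
    simp only [Nat.succ_ne_zero, if_false]
    ring

end SBTAux4

open Finset

theorem sbt_count_schroder (T : PowerSeries ℚ)
    (h0 : PowerSeries.constantCoeff T = 0)
    (hT : T = PowerSeries.X + PowerSeries.X * T + T ^ 2) :
    ∀ n : ℕ, PowerSeries.coeff n T = (sbtCount n : ℚ) := by
  intro n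
  induction n using Nat.strong_induction_on with
  | _ n ih =>
    have hc0 : PowerSeries.coeff 0 T = 0 := by
      rw [PowerSeries.coeff_zero_eq_constantCoeff]; exact h0
    cases n with
    | zero =>
      rw [hc0, SBTAux3.sbt_zero]
      simp
    | succ m =>
      have step := congrArg (PowerSeries.coeff (m + 1)) hT
      rw [map_add, map_add, PowerSeries.coeff_X, PowerSeries.coeff_succ_X_mul, pow_two,
        PowerSeries.coeff_mul, Finset.Nat.sum_antidiagonal_eq_sum_range_succ_mk] at step
      have hsum : ∑ k ∈ range (m + 2),
          (PowerSeries.coeff k T) * (PowerSeries.coeff (m + 1 - k) T)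
          = ∑ k ∈ range (m + 2), ((sbtCount k : ℚ) * (sbtCount (m + 1 - k) : ℚ)) := by
        refine Finset.sum_congr rfl fun k hk => ?_
        rcases eq_or_ne k 0 with rfl | hk0
        · rw [hc0, SBTAux3.sbt_zero]; simp
        rcases eq_or_ne k (m + 1) with rfl | hk1
        · have h1 : m + 1 - (m + 1) = 0 := by omega
          rw [h1, hc0, SBTAux3.sbt_zero]; simp
        · have hk2 : k < m + 1 := by simp at hk; omega
          rw [ih k hk2, ih (m + 1 - k) (by omega)]
      rw [step, ih m (by omega), hsum, SBTAux4.key m]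
      push_cast
      rcases eq_or_ne m 0 with rfl | hm
      · norm_num
      · simp [hm, ]
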